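/- The function u ↦ |Φ^{-1}(u)|/φ(Φ^{-1}(u)) satisfies |Φ^{-1}(u)|/φ(Φ^{-1}(u)) = O(1/(u(1-u))) on (0,1), that is, sup_{u∈(0,1)} u(1-u)|Φ^{-1}(u)|/φ(Φ^{-1}(u)) < ∞. -/

import Mathlib

open MeasureTheory Set Filter

/-- The standard normal density. -/
noncomputable def stdPhi (x : ℝ) : ℝ := Real.exp (-x^2/2) / Real.sqrt (2*Real.pi)

/-- The standard normal cumulative distribution function. -/
noncomputable def stdCDF (x : ℝ) : ℝ := ∫ t in Set.Iic x, stdPhi t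

lemma stdPhi_pos (x : ℝ) : 0 < stdPhi x := by
  apply div_pos (Real.exp_pos _)
  exact Real.sqrt_pos.2 (by positivity)

lemma stdPhi_eq (x : ℝ) : stdPhi x = Real.exp (-(1/2) * x^2) / Real.sqrt (2*Real.pi) := by
  unfold stdPhi; ring_nf

lemma integrable_stdPhi : Integrable stdPhi := by
  have h : Integrable (fun x : ℝ => Real.exp (-(1/2) * x^2)) :=
    integrable_exp_neg_mul_sq (by norm_num)
  exact (h.div_const (Real.sqrt (2*Real.pi))).congr
    (Filter.Eventually.of_forall fun x => (stdPhi_eq x).symm)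

lemma integral_stdPhi : ∫ x, stdPhi x = 1 := by
  have h : ∫ x : ℝ, Real.exp (-(1/2) * x^2) = Real.sqrt (Real.pi / (1/2)) :=
    integral_gaussian (1/2)
  have h2 : (Real.pi / (1/2)) = 2 * Real.pi := by ring
  rw [show stdPhi = fun x => Real.exp (-(1/2)*x^2) / Real.sqrt (2*Real.pi) from
    funext stdPhi_eq, integral_div, h, h2, div_self]
  positivity

lemma hasDerivAt_stdPhi (x : ℝ) : HasDerivAt stdPhi (-x * stdPhi x) x := by
  have h : HasDerivAt (fun t : ℝ => Real.exp (-t^2/2)) (-x * Real.exp (-x^2/2)) x := by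
    have h1 : HasDerivAt (fun t : ℝ => -t^2/2) (-x) x := by
      have := ((hasDerivAt_pow 2 x).neg).div_const 2
      simpa using this.congr_deriv (by ring)
    have h2 := h1.exp
    convert h2 using 1
    ring
  have := h.div_const (Real.sqrt (2*Real.pi))
  unfold stdPhi
  exact this.congr_deriv (by ring)

lemma tendsto_stdPhi_atTop : Tendsto stdPhi atTop (nhds 0) := by
  have h1 : Tendsto (fun x : ℝ => -x^2/2) atTop atBot := by
    apply Tendsto.atBot_div_const (by norm_num)
    exact tendsto_neg_atTop_atBot.comp (tendsto_pow_atTop (by norm_num : 2 ≠ 0))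
  have h2 := (Real.tendsto_exp_atBot.comp h1).div_const (Real.sqrt (2*Real.pi))
  rw [zero_div] at h2
  exact h2.congr fun x => rfl

lemma tendsto_stdPhi_atBot : Tendsto stdPhi atBot (nhds 0) := by
  have h1 : Tendsto (fun x : ℝ => -x^2/2) atBot atBot := by
    apply Tendsto.atBot_div_const (by norm_num)
    have hsq : Tendsto (fun x : ℝ => x^2) atBot atTop := by
      have hneg : Tendsto (fun x : ℝ => -x) atBot atTop := tendsto_neg_atBot_atTop
      have hpow : Tendsto (fun y : ℝ => y^2) atTop atTop := tendsto_pow_atTop (by norm_num)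
      exact (hpow.comp hneg).congr fun x => by simp [Function.comp]
    have hneg2 : Tendsto (fun y : ℝ => -y) atTop atBot := tendsto_neg_atTop_atBot
    exact hneg2.comp hsq
  have h2 := (Real.tendsto_exp_atBot.comp h1).div_const (Real.sqrt (2*Real.pi))
  rw [zero_div] at h2
  exact h2.congr fun x => rfl

/-- Mills ratio, upper tail: for x ≥ 0, x * (1 - Φ(x)) ≤ φ(x). -/
lemma mills_upper {x : ℝ} (hx : 0 ≤ x) : x * (1 - stdCDF x) ≤ stdPhi x := by
  have hsplit : stdCDF x + ∫ t in Ioi x, stdPhi t = 1 := by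
    rw [stdCDF, ← integral_stdPhi]
    rw [← setIntegral_union (Iic_disjoint_Ioi le_rfl) measurableSet_Ioi
      integrable_stdPhi.integrableOn integrable_stdPhi.integrableOn, Iic_union_Ioi,
      setIntegral_univ]
  have h1 : 1 - stdCDF x = ∫ t in Ioi x, stdPhi t := by linarith
  -- ∫ t in Ioi x, t * φ t = φ x
  have hderiv : ∀ t ∈ Ioi x, HasDerivAt (fun t => -stdPhi t) (t * stdPhi t) t := by
    intro t _
    exact (hasDerivAt_stdPhi t).neg.congr_deriv (by ring)
  have hint : ∫ t in Ioi x, t * stdPhi t = stdPhi x := by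
    have := integral_Ioi_of_hasDerivAt_of_nonneg
      ((hasDerivAt_stdPhi x).neg.continuousAt.continuousWithinAt) hderiv
      (fun t ht => mul_nonneg (le_of_lt (lt_of_le_of_lt hx ht)) (stdPhi_pos t).le)
      (tendsto_stdPhi_atTop.neg)
    simpa using this
  rw [h1, ← hint]
  rw [← integral_const_mul]
  apply setIntegral_mono_on
  · exact (integrable_stdPhi.integrableOn).const_mul x
  · exact (integrableOn_Ioi_deriv_of_nonneg
      ((hasDerivAt_stdPhi x).neg.continuousAt.continuousWithinAt) hderiv
      (fun t ht => mul_nonneg (le_of_lt (lt_of_le_of_lt hx ht)) (stdPhi_pos t).le)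
      (tendsto_stdPhi_atTop.neg))
  · exact measurableSet_Ioi
  · intro t ht
    exact mul_le_mul_of_nonneg_right (le_of_lt ht) (stdPhi_pos t).le

/-- Mills ratio, lower tail: for x ≤ 0, (-x) * Φ(x) ≤ φ(x). -/
lemma mills_lower {x : ℝ} (hx : x ≤ 0) : (-x) * stdCDF x ≤ stdPhi x := by
  have hderiv : ∀ t ∈ Iio x, HasDerivAt stdPhi (-t * stdPhi t) t :=
    fun t _ => hasDerivAt_stdPhi t
  have hintble : IntegrableOn (fun t => -t * stdPhi t) (Iic x) := by
    have h : Integrable (fun t : ℝ => t * Real.exp (-(1/2) * t^2)) :=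
      integrable_mul_exp_neg_mul_sq (by norm_num)
    have h2 : Integrable (fun t : ℝ => -t * stdPhi t) := by
      have := (h.mul_const (Real.sqrt (2*Real.pi))⁻¹).neg
      apply this.congr
      filter_upwards with t
      simp [stdPhi_eq, div_eq_mul_inv]
      ring
    exact h2.integrableOn
  have hint : ∫ t in Iic x, -t * stdPhi t = stdPhi x := by
    have := integral_Iic_of_hasDerivAt_of_tendsto
      ((hasDerivAt_stdPhi x).continuousAt.continuousWithinAt) hderiv hintble
      tendsto_stdPhi_atBot
    simpa using this
  rw [stdCDF, ← hint, ← integral_const_mul]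
  apply setIntegral_mono_on
  · exact (integrable_stdPhi.integrableOn).const_mul (-x)
  · exact hintble
  · exact measurableSet_Iic
  · intro t ht
    exact mul_le_mul_of_nonneg_right (by linarith [ht.out]) (stdPhi_pos t).le

/-- `|Φ⁻¹(u)|/φ(Φ⁻¹(u)) = O(1/(u(1-u)))` on `(0,1)`:
`sup_{u∈(0,1)} u(1-u)|Φ⁻¹(u)|/φ(Φ⁻¹(u)) < ∞`. -/
theorem stmt13 (Φinv : ℝ → ℝ)
    (hinv : ∀ v ∈ Set.Ioo (0:ℝ) 1, stdCDF (Φinv v) = v)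
    (hinv' : ∀ x : ℝ, Φinv (stdCDF x) = x) :
    ∃ M : ℝ, ∀ u ∈ Set.Ioo (0:ℝ) 1,
      u * (1 - u) * |Φinv u| / stdPhi (Φinv u) ≤ M := by
  refine ⟨1, fun u hu => ?_⟩
  obtain ⟨hu0, hu1⟩ := hu
  set x := Φinv u with hx
  have hcdf : stdCDF x = u := hinv u ⟨hu0, hu1⟩
  have hφ : 0 < stdPhi x := stdPhi_pos x
  rw [div_le_one hφ]
  rcases le_or_gt 0 x with hx0 | hx0
  · have h1 : u * (1 - u) * |x| ≤ x * (1 - u) := by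
      rw [abs_of_nonneg hx0]
      nlinarith [mul_nonneg hx0 (sq_nonneg (1-u))]
    calc u * (1 - u) * |x| ≤ x * (1 - u) := h1
      _ = x * (1 - stdCDF x) := by rw [hcdf]
      _ ≤ stdPhi x := mills_upper hx0
  · have h1 : u * (1 - u) * |x| ≤ (-x) * u := by
      rw [abs_of_neg hx0]
      nlinarith [mul_nonneg (by linarith : (0:ℝ) ≤ -x) (sq_nonneg u)]
    calc u * (1 - u) * |x| ≤ (-x) * u := h1
      _ = (-x) * stdCDF x := by rw [hcdf]
      _ ≤ stdPhi x := mills_lower hx0.le
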